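/- arXiv:2006.02070 — 6 statements merged into one kernel-verified Lean document; each statement's English description precedes it below -/
import Mathlib

section
/- There exists a constant K > 0 such that for every positive integer M and all x, y ∈ [-π, π] with xy ≠ 0 and x ≠ y, |⅟(x-y) · Σ_{k=1}^{M} (e^{ikx} - e^{iky})/k| ≤ K/√(|xy|). -/
/-!
Let `S_M(t) = ∑_{k=1}^M e^{ikt}/k`. Its derivative `i ∑_{k=1}^M e^{ikt}` is a geometric sum of
norm at most `2 / |e^{it} - 1| ≤ π / |t|` on `[-π, π]`. For `x, y` of the same sign, integrating
this bound gives `|S_M(x) - S_M(y)| ≤ π |log (y / x)| ≤ 2π |x - y| / √(xy)`.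

For `x, y` of opposite signs the segment between them passes through the singularity at `0`, so
instead the sum is split at `N ≈ 1 / √|xy|`. Each of the first `N` terms is `|x - y|`-Lipschitz,
and by summation by parts the tail at `t` has norm at most `π / (|t| (N + 1))`. Since
`|x| + |y| = |x - y|`, both pieces are `O(|x - y| / √|xy|)`.
-/

open scoped Real
open Complex Finset ComplexConjugate

section SummationByParts

variable {E : Type*} [NormedAddCommGroup E] [NormedSpace ℝ E]

theorem sum_Ioc_smul_by_parts (w : ℕ → ℝ) (z : ℕ → E) {N M : ℕ} (hNM : N ≤ M) :
    ∑ k ∈ Ioc N M, w k • z k =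
      w (M + 1) • ∑ k ∈ Ioc N M, z k +
        ∑ k ∈ Ioc N M, (w k - w (k + 1)) • ∑ j ∈ Ioc N k, z j := by
  induction M, hNM using Nat.le_induction with
  | base => simp
  | succ M hNM ih =>
    simp only [sum_Ioc_succ_top hNM, ih, smul_add, sub_smul]
    abel

theorem norm_sum_Ioc_smul_le_of_antitoneOn {w : ℕ → ℝ} {z : ℕ → E} {N : ℕ} {B : ℝ}
    (hw : AntitoneOn w (Set.Ioi N)) (hw₀ : ∀ k, N < k → 0 ≤ w k)
    (hz : ∀ m, ‖∑ k ∈ Ioc N m, z k‖ ≤ B) (M : ℕ) :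
    ‖∑ k ∈ Ioc N M, w k • z k‖ ≤ B * w (N + 1) := by
  have hB : 0 ≤ B := by simpa using hz N
  rcases lt_or_ge M N with hMN | hNM
  · rw [Ioc_eq_empty (by omega), sum_empty, norm_zero]
    exact mul_nonneg hB (hw₀ _ (by omega))
  have hdiff : ∀ k ∈ Ioc N M, 0 ≤ w k - w (k + 1) := fun k hk =>
    sub_nonneg.2 (hw (Set.mem_Ioi.2 (mem_Ioc.1 hk).1) (Set.mem_Ioi.2 (by grind)) (by omega))
  have htelescope : ∑ k ∈ Ioc N M, (w k - w (k + 1)) = w (N + 1) - w (M + 1) := by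
    rw [← neg_sub (w (M + 1)), ← sum_Ico_sub w (by omega : N + 1 ≤ M + 1),
      Ico_add_one_add_one_eq_Ioc, ← sum_neg_distrib]
    simp only [neg_sub]
  rw [sum_Ioc_smul_by_parts w z hNM]
  calc _ ≤ w (M + 1) * B + ∑ k ∈ Ioc N M, (w k - w (k + 1)) * B := by
        refine (norm_add_le _ _).trans (add_le_add ?_ ((norm_sum_le _ _).trans (sum_le_sum ?_)))
        · rw [norm_smul, Real.norm_of_nonneg (hw₀ _ (by omega))]
          exact mul_le_mul_of_nonneg_left (hz M) (hw₀ _ (by omega))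
        · intro k hk
          rw [norm_smul, Real.norm_of_nonneg (hdiff k hk)]
          exact mul_le_mul_of_nonneg_left (hz k) (hdiff k hk)
    _ = B * w (N + 1) := by rw [← sum_mul, htelescope]; ring

end SummationByParts

theorem two_mul_abs_div_pi_le_norm_cexp_sub_one {t : ℝ} (ht : |t| ≤ π) :
    2 * |t| / π ≤ ‖cexp (I * t) - 1‖ := by
  have hsin := Real.mul_abs_le_abs_sin (x := t / 2) (by rw [abs_div, abs_two]; linarith)
  rw [abs_div, abs_two] at hsin
  rw [norm_exp_I_mul_ofReal_sub_one, norm_mul, Real.norm_eq_abs, Real.norm_eq_abs, abs_two]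
  calc 2 * |t| / π = 2 * (2 / π * (|t| / 2)) := by ring
    _ ≤ _ := by gcongr

theorem norm_sum_Ioc_pow_mul_norm_sub_one_le {z : ℂ} (hz : ‖z‖ = 1) (N M : ℕ) :
    ‖∑ k ∈ Ioc N M, z ^ k‖ * ‖z - 1‖ ≤ 2 := by
  rcases lt_or_ge M N with hMN | hNM
  · simp [Ioc_eq_empty_of_le hMN.le]
  rw [← norm_mul, ← Ico_add_one_add_one_eq_Ioc, geom_sum_Ico_mul _ (by omega)]
  calc _ ≤ ‖z ^ (M + 1)‖ + ‖z ^ (N + 1)‖ := norm_sub_le _ _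
    _ = 2 := by rw [norm_pow, norm_pow, hz]; norm_num

theorem norm_sum_Ioc_cexp_le {t : ℝ} (ht₀ : t ≠ 0) (ht : |t| ≤ π) (N M : ℕ) :
    ‖∑ k ∈ Ioc N M, cexp (I * k * t)‖ ≤ π / |t| := by
  have hpow (k : ℕ) : cexp (I * k * t) = cexp (I * t) ^ k := by
    rw [← Complex.exp_nat_mul]; ring_nf
  have hlow := two_mul_abs_div_pi_le_norm_cexp_sub_one ht
  have hpos : 0 < 2 * |t| / π := by positivity
  have hgeom := norm_sum_Ioc_pow_mul_norm_sub_one_le (norm_exp_I_mul_ofReal t) N M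
  simp_rw [hpow]
  calc _ ≤ 2 / ‖cexp (I * t) - 1‖ := by rw [le_div_iff₀ (hpos.trans_le hlow)]; exact hgeom
    _ ≤ 2 / (2 * |t| / π) := div_le_div_of_nonneg_left (by norm_num) hpos hlow
    _ = π / |t| := by field_simp

theorem norm_sum_Ioc_cexp_div_le {t : ℝ} (ht₀ : t ≠ 0) (ht : |t| ≤ π) (N M : ℕ) :
    ‖∑ k ∈ Ioc N M, cexp (I * k * t) / k‖ ≤ π / |t| / (N + 1) := by
  have hanti : AntitoneOn (fun k : ℕ => (k : ℝ)⁻¹) (Set.Ioi N) := fun a ha b _ hab =>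
    inv_anti₀ (Nat.cast_pos.2 (Nat.zero_lt_of_lt ha)) (by exact_mod_cast hab)
  have h := norm_sum_Ioc_smul_le_of_antitoneOn hanti (fun k _ => by positivity)
    (norm_sum_Ioc_cexp_le ht₀ ht N) M
  simpa [Complex.real_smul, div_eq_mul_inv, mul_comm] using h

theorem norm_cexp_I_mul_sub_cexp_I_mul_le (k : ℕ) (x y : ℝ) :
    ‖cexp (I * k * x) - cexp (I * k * y)‖ ≤ k * |x - y| := by
  have hfactor : cexp (I * k * x) - cexp (I * k * y) =
      cexp (I * ↑(k * y)) * (cexp (I * ↑(k * (x - y))) - 1) := by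
    push_cast
    rw [mul_sub, ← Complex.exp_add]
    ring_nf
  rw [hfactor, norm_mul, norm_exp_I_mul_ofReal, one_mul]
  calc _ ≤ ‖(k * (x - y) : ℝ)‖ := Real.norm_exp_I_mul_ofReal_sub_one_le
    _ = k * |x - y| := by rw [Real.norm_eq_abs, abs_mul, Nat.abs_cast]

noncomputable def harmonicExpSum (M : ℕ) (t : ℝ) : ℂ :=
  ∑ k ∈ Icc 1 M, cexp (I * k * t) / k

theorem harmonicExpSum_neg (M : ℕ) (t : ℝ) :
    harmonicExpSum M (-t) = conj (harmonicExpSum M t) := by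
  simp only [harmonicExpSum, map_sum, map_div₀, ← Complex.exp_conj, map_mul, conj_I,
    conj_ofReal, map_natCast, ofReal_neg]
  exact sum_congr rfl fun k _ => by ring_nf

theorem norm_harmonicExpSum_sub_le_mul (M : ℕ) (x y : ℝ) :
    ‖harmonicExpSum M x - harmonicExpSum M y‖ ≤ M * |x - y| := by
  rw [harmonicExpSum, harmonicExpSum, ← sum_sub_distrib]
  calc _ ≤ ∑ k ∈ Icc 1 M, |x - y| := norm_sum_le_of_le _ fun k hk => ?_
    _ = M * |x - y| := by simp
  have hk : (0 : ℝ) < k := by have := (mem_Icc.1 hk).1; positivity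
  rw [← sub_div, norm_div, Complex.norm_natCast, div_le_iff₀ hk]
  linarith [norm_cexp_I_mul_sub_cexp_I_mul_le k x y]

theorem norm_harmonicExpSum_sub_le_of_cutoff (M N : ℕ) {x y : ℝ} (hx₀ : x ≠ 0)
    (hx : |x| ≤ π) (hy₀ : y ≠ 0) (hy : |y| ≤ π) :
    ‖harmonicExpSum M x - harmonicExpSum M y‖ ≤
      N * |x - y| + (π / |x| + π / |y|) / (N + 1) := by
  rcases le_total M N with hMN | hNM
  · calc _ ≤ M * |x - y| := norm_harmonicExpSum_sub_le_mul M x y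
      _ ≤ N * |x - y| := by gcongr
      _ ≤ _ := le_add_of_nonneg_right (by positivity)
  have hsplit (t : ℝ) :
      harmonicExpSum M t = harmonicExpSum N t + ∑ k ∈ Ioc N M, cexp (I * k * t) / k :=
    (sum_Ioc_consecutive _ (Nat.zero_le N) hNM).symm
  rw [hsplit, hsplit, add_sub_add_comm, add_div]
  exact (norm_add_le _ _).trans (add_le_add (norm_harmonicExpSum_sub_le_mul N x y)
    ((norm_sub_le _ _).trans (add_le_add (norm_sum_Ioc_cexp_div_le hx₀ hx N M)
      (norm_sum_Ioc_cexp_div_le hy₀ hy N M))))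

theorem hasDerivAt_harmonicExpSum (M : ℕ) (t : ℝ) :
    HasDerivAt (harmonicExpSum M) (I * ∑ k ∈ Icc 1 M, cexp (I * k * t)) t := by
  rw [mul_sum]
  refine HasDerivAt.fun_sum fun k hk => ?_
  have hk : (k : ℂ) ≠ 0 := by have := (mem_Icc.1 hk).1; exact_mod_cast (by omega : k ≠ 0)
  have h := ((hasDerivAt_id t).ofReal_comp.const_mul (I * k)).cexp.div_const (k : ℂ)
  simp only [id, ofReal_one, mul_one] at h
  exact h.congr_deriv (by field_simp)

theorem norm_harmonicExpSum_sub_le_log (M : ℕ) {x y : ℝ} (hx : 0 < x) (hxy : x ≤ y)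
    (hy : y ≤ π) :
    ‖harmonicExpSum M y - harmonicExpSum M x‖ ≤ π * Real.log (y / x) := by
  have hderiv_cont : Continuous fun t : ℝ => I * ∑ k ∈ Icc 1 M, cexp (I * k * t) := by
    fun_prop
  rw [← intervalIntegral.integral_eq_sub_of_hasDerivAt
      (fun t _ => hasDerivAt_harmonicExpSum M t) (hderiv_cont.intervalIntegrable x y),
    ← integral_inv_of_pos hx (hx.trans_le hxy), ← intervalIntegral.integral_const_mul]
  refine intervalIntegral.norm_integral_le_of_norm_le hxy
    (MeasureTheory.ae_of_all _ fun t ht => ?_) ?_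
  · have ht₀ : 0 < t := hx.trans ht.1
    have hdir := norm_sum_Ioc_cexp_le ht₀.ne' ((abs_of_pos ht₀).trans_le (ht.2.trans hy)) 0 M
    rw [abs_of_pos ht₀] at hdir
    rw [norm_mul, norm_I, one_mul, ← div_eq_mul_inv]
    exact hdir
  · refine (continuousOn_const.mul (continuousOn_inv₀.mono ?_)).intervalIntegrable
    intro t ht
    rw [Set.uIcc_of_le hxy] at ht
    exact (hx.trans_le ht.1).ne'

theorem Real.log_div_le_two_mul_sub_div_sqrt_mul {x y : ℝ} (hx : 0 < x) (hxy : x ≤ y) :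
    Real.log (y / x) ≤ 2 * (y - x) / √(x * y) := by
  obtain ⟨a, ha, rfl⟩ : ∃ a, 0 < a ∧ x = a ^ 2 :=
    ⟨√x, Real.sqrt_pos.2 hx, (Real.sq_sqrt hx.le).symm⟩
  obtain ⟨b, hb, rfl⟩ : ∃ b, 0 < b ∧ y = b ^ 2 :=
    ⟨√y, Real.sqrt_pos.2 (hx.trans_le hxy), (Real.sq_sqrt (hx.trans_le hxy).le).symm⟩
  have hab : a ≤ b := (pow_le_pow_iff_left₀ ha.le hb.le two_ne_zero).1 hxy
  have hlog := Real.log_le_sub_one_of_pos (div_pos hb ha)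
  rw [← mul_pow, Real.sqrt_sq (by positivity), ← div_pow, Real.log_pow]
  calc (2 : ℕ) * Real.log (b / a) ≤ 2 * (b / a - 1) := by push_cast; linarith
    _ ≤ 2 * (b ^ 2 - a ^ 2) / (a * b) := by
      have : (b - a) / a ≤ (b ^ 2 - a ^ 2) / (a * b) := by
        rw [div_le_div_iff₀ ha (by positivity)]
        nlinarith [mul_nonneg (sub_nonneg.2 hab) ha.le]
      rw [div_sub_one ha.ne', mul_div_assoc]
      linarith

theorem norm_harmonicExpSum_sub_le_of_pos (M : ℕ) {x y : ℝ} (hx : 0 < x) (hxπ : x ≤ π)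
    (hy : 0 < y) (hyπ : y ≤ π) :
    ‖harmonicExpSum M x - harmonicExpSum M y‖ ≤ 2 * π * |x - y| / √(x * y) := by
  wlog hxy : x ≤ y generalizing x y
  · rw [norm_sub_rev, abs_sub_comm, mul_comm x]
    exact this hy hyπ hx hxπ (le_of_not_ge hxy)
  rw [norm_sub_rev, abs_of_nonpos (sub_nonpos.2 hxy), neg_sub]
  calc _ ≤ π * Real.log (y / x) := norm_harmonicExpSum_sub_le_log M hx hxy hyπ
    _ ≤ π * (2 * (y - x) / √(x * y)) := by
      gcongr; exact Real.log_div_le_two_mul_sub_div_sqrt_mul hx hxy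
    _ = _ := by ring

theorem norm_harmonicExpSum_sub_le_of_mul_neg (M : ℕ) {x y : ℝ} (hx : |x| ≤ π)
    (hy : |y| ≤ π) (hxy : x * y < 0) :
    ‖harmonicExpSum M x - harmonicExpSum M y‖ ≤ (1 + 2 * π) * |x - y| / √|x * y| := by
  have hx₀ : x ≠ 0 := left_ne_zero_of_mul hxy.ne
  have hy₀ : y ≠ 0 := right_ne_zero_of_mul hxy.ne
  have hdist : |x - y| = |x| + |y| := by
    rcases mul_neg_iff.1 hxy with ⟨hx', hy'⟩ | ⟨hx', hy'⟩
    · rw [abs_of_pos hx', abs_of_neg hy', abs_of_pos (by linarith)]; ring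
    · rw [abs_of_neg hx', abs_of_pos hy', abs_of_neg (by linarith)]; ring
  set r := √|x * y|
  have hr : 0 < r := Real.sqrt_pos.2 (abs_pos.2 hxy.ne)
  have hr_sq : r ^ 2 = |x| * |y| := by rw [Real.sq_sqrt (abs_nonneg _), abs_mul]
  have hrπ : r ≤ π := by
    refine (pow_le_pow_iff_left₀ hr.le Real.pi_pos.le two_ne_zero).1 ?_
    rw [hr_sq, sq]
    exact mul_le_mul hx hy (abs_nonneg _) Real.pi_pos.le
  set N := ⌈r⁻¹⌉₊
  have hN : r⁻¹ ≤ N := Nat.le_ceil _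
  have hN' : (N : ℝ) < r⁻¹ + 1 := Nat.ceil_lt_add_one (by positivity)
  have hhead : N * |x - y| ≤ (1 + π) * |x - y| / r := by
    have : (N : ℝ) ≤ (1 + π) / r := by
      rw [add_div, one_div]
      have : 1 ≤ π / r := by rw [le_div_iff₀ hr]; linarith
      linarith
    calc _ ≤ (1 + π) / r * |x - y| := by gcongr
      _ = _ := by ring
  have htail : (π / |x| + π / |y|) / (N + 1) ≤ π * |x - y| / r := by
    have hsum : π / |x| + π / |y| = π * |x - y| / r * r⁻¹ := by
      rw [hdist]; field_simp; rw [hr_sq]; ring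
    rw [hsum, div_le_iff₀ (by positivity)]
    gcongr
    linarith
  calc _ ≤ N * |x - y| + (π / |x| + π / |y|) / (N + 1) :=
        norm_harmonicExpSum_sub_le_of_cutoff M N hx₀ hx hy₀ hy
    _ ≤ (1 + π) * |x - y| / r + π * |x - y| / r := add_le_add hhead htail
    _ = _ := by ring

theorem norm_harmonicExpSum_sub_le (M : ℕ) {x y : ℝ} (hx : x ∈ Set.Icc (-π) π)
    (hy : y ∈ Set.Icc (-π) π) (hxy : x * y ≠ 0) :
    ‖harmonicExpSum M x - harmonicExpSum M y‖ ≤ (1 + 2 * π) * |x - y| / √|x * y| := by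
  rcases hxy.lt_or_gt with hneg | hpos
  · exact norm_harmonicExpSum_sub_le_of_mul_neg M (abs_le.2 hx) (abs_le.2 hy) hneg
  refine le_trans ?_ (by gcongr; linarith : 2 * π * |x - y| / √|x * y| ≤ _)
  rw [abs_of_pos hpos]
  rcases mul_pos_iff.1 hpos with ⟨hx₀, hy₀⟩ | ⟨hx₀, hy₀⟩
  · exact norm_harmonicExpSum_sub_le_of_pos M hx₀ hx.2 hy₀ hy.2
  · have h := norm_harmonicExpSum_sub_le_of_pos M (neg_pos.2 hx₀) (neg_le.1 hx.1)
      (neg_pos.2 hy₀) (neg_le.1 hy.1)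
    rwa [harmonicExpSum_neg, harmonicExpSum_neg, ← map_sub, norm_conj, neg_mul_neg,
      neg_sub_neg, abs_sub_comm] at h

theorem exp_sum_diff_bound :
    ∃ K : ℝ, 0 < K ∧ ∀ (M : ℕ), 0 < M → ∀ x y : ℝ,
      x ∈ Set.Icc (-π) π → y ∈ Set.Icc (-π) π → x * y ≠ 0 → x ≠ y →
      ‖((((x : ℂ) - y)⁻¹) *
        ∑ k ∈ Finset.Icc 1 M,
          (Complex.exp (Complex.I * k * x) - Complex.exp (Complex.I * k * y)) / k)‖
        ≤ K / Real.sqrt |x * y| := by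
  refine ⟨1 + 2 * π, by positivity, fun M _ x y hx hy hxy hne => ?_⟩
  have hsum : ∑ k ∈ Finset.Icc 1 M, (cexp (I * k * x) - cexp (I * k * y)) / k =
      harmonicExpSum M x - harmonicExpSum M y := by
    simp only [harmonicExpSum, ← sum_sub_distrib, sub_div]
  have hdist : 0 < |x - y| := abs_pos.2 (sub_ne_zero.2 hne)
  rw [hsum, norm_mul, norm_inv, ← ofReal_sub, norm_real, Real.norm_eq_abs]
  calc _ ≤ |x - y|⁻¹ * ((1 + 2 * π) * |x - y| / √|x * y|) := by
        gcongr; exact norm_harmonicExpSum_sub_le M hx hy hxy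
    _ = (1 + 2 * π) / √|x * y| := by field_simp
end

section
/- For all x, y with 0 < y < x ≤ π and every positive integer M, |Σ_{k=1}^{M} (e^{ikx} - e^{iky})/k| ≤ π(log x - log y). -/
open scoped Real

/-!
Each term is `(e^{ikx} - e^{iky}) / k = ∫_y^x i e^{iks} ds`, so the sum is the integral over
`[y, x]` of `i` times a Dirichlet-type sum. Summing the geometric series, that sum has modulus at
most `2 / |e^{is} - 1| = 1 / sin (s / 2) ≤ π / s` by Jordan's inequality, and
`∫_y^x π / s ds = π (log x - log y)`.
-/

open Finset Complex

lemma two_mul_div_pi_le_norm_exp_I_mul_sub_one {s : ℝ} (hs : 0 ≤ s) (hsπ : s ≤ π) :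
    2 * s / π ≤ ‖exp (I * s) - 1‖ := by
  have hsin : 0 ≤ Real.sin (s / 2) :=
    Real.sin_nonneg_of_nonneg_of_le_pi (by linarith) (by linarith)
  have hjordan : 2 / π * (s / 2) ≤ Real.sin (s / 2) :=
    Real.mul_le_sin (by linarith) (by linarith)
  rw [norm_exp_I_mul_ofReal_sub_one, Real.norm_eq_abs, abs_of_nonneg (by linarith)]
  calc 2 * s / π = 2 * (2 / π * (s / 2)) := by ring
    _ ≤ 2 * Real.sin (s / 2) := by linarith

lemma norm_geom_sum_le_of_norm_eq_one {𝕜 : Type*} [NormedDivisionRing 𝕜] {z : 𝕜}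
    (hz : ‖z‖ = 1) (hz1 : z ≠ 1) (n : ℕ) : ‖∑ k ∈ range n, z ^ k‖ ≤ 2 / ‖z - 1‖ := by
  rw [geom_sum_eq hz1, norm_div]
  gcongr
  calc ‖z ^ n - 1‖ ≤ ‖z ^ n‖ + ‖(1 : 𝕜)‖ := norm_sub_le _ _
    _ = 2 := by rw [norm_pow, hz, one_pow, norm_one]; norm_num

lemma norm_sum_exp_I_mul_le {s : ℝ} (hs : 0 < s) (hsπ : s ≤ π) (M : ℕ) :
    ‖∑ k ∈ Icc 1 M, exp (I * k * s)‖ ≤ π / s := by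
  set z := exp (I * s) with hz_def
  have hz : ‖z‖ = 1 := by rw [hz_def, mul_comm]; exact norm_exp_ofReal_mul_I s
  have hlb : 2 * s / π ≤ ‖z - 1‖ := two_mul_div_pi_le_norm_exp_I_mul_sub_one hs.le hsπ
  have hz1 : z ≠ 1 :=
    sub_ne_zero.mp (norm_pos_iff.mp ((by positivity : (0 : ℝ) < 2 * s / π).trans_le hlb))
  have hsum : ∑ k ∈ Icc 1 M, exp (I * k * s) = z * ∑ k ∈ range M, z ^ k := by
    rw [mul_sum, ← Ico_add_one_right_eq_Icc, sum_Ico_eq_sum_range]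
    refine sum_congr rfl fun k _ => ?_
    rw [← pow_succ', ← exp_nat_mul]
    push_cast
    ring_nf
  calc ‖∑ k ∈ Icc 1 M, exp (I * k * s)‖ ≤ 2 / ‖z - 1‖ := by
        rw [hsum, norm_mul, hz, one_mul]; exact norm_geom_sum_le_of_norm_eq_one hz hz1 M
    _ ≤ 2 / (2 * s / π) := by gcongr
    _ = π / s := by field_simp

lemma exp_I_mul_sub_div_eq_integral {c : ℂ} (hc : c ≠ 0) (x y : ℝ) :
    (exp (I * c * x) - exp (I * c * y)) / c = ∫ s in y..x, I * exp (I * c * s) := by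
  rw [intervalIntegral.integral_const_mul, integral_exp_mul_complex (mul_ne_zero I_ne_zero hc)]
  field_simp

lemma norm_integral_le_mul_log_sub {E : Type*} [NormedAddCommGroup E] [NormedSpace ℝ E]
    {f : ℝ → E} {x y C : ℝ} (hy : 0 < y) (hyx : y ≤ x)
    (hf : ∀ t ∈ Set.Ioc y x, ‖f t‖ ≤ C / t) :
    ‖∫ t in y..x, f t‖ ≤ C * (Real.log x - Real.log y) := by
  have hx : 0 < x := hy.trans_le hyx
  have hint : IntervalIntegrable (fun t => C / t) MeasureTheory.volume y x :=
    (continuousOn_const.div continuousOn_id fun t ht =>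
      ((hy.trans_le (Set.uIcc_of_le hyx ▸ ht).1).ne')).intervalIntegrable
  calc ‖∫ t in y..x, f t‖ ≤ ∫ t in y..x, C / t :=
        intervalIntegral.norm_integral_le_of_norm_le hyx (.of_forall hf) hint
    _ = C * (Real.log x - Real.log y) := by
        simp only [div_eq_mul_inv]
        rw [intervalIntegral.integral_const_mul, integral_inv_of_pos hy hx,
          Real.log_div hx.ne' hy.ne']

theorem exp_sum_diff_le_pi_log_general (x y : ℝ) (hy : 0 < y) (hyx : y < x) (hx : x ≤ π)
    (M : ℕ) :
    ‖(∑ k ∈ Finset.Icc 1 M,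
        (Complex.exp (Complex.I * k * x) - Complex.exp (Complex.I * k * y)) / k)‖
      ≤ π * (Real.log x - Real.log y) := by
  have hterm : ∀ k ∈ Icc 1 M, (exp (I * k * x) - exp (I * k * y)) / k
      = ∫ s in y..x, I * exp (I * k * s) := fun k hk =>
    exp_I_mul_sub_div_eq_integral
      (Nat.cast_ne_zero.mpr (Nat.one_le_iff_ne_zero.mp (mem_Icc.mp hk).1)) x y
  rw [sum_congr rfl hterm, ← intervalIntegral.integral_finsetSum fun k _ =>
    (by fun_prop : Continuous _).intervalIntegrable _ _]
  refine norm_integral_le_mul_log_sub hy hyx.le fun t ht => ?_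
  rw [← mul_sum, norm_mul, norm_I, one_mul]
  exact norm_sum_exp_I_mul_le (hy.trans ht.1) (ht.2.trans hx) M

theorem exp_sum_diff_le_pi_log (x y : ℝ) (hy : 0 < y) (hyx : y < x) (hx : x ≤ π)
    (M : ℕ) (hM : 0 < M) :
    ‖(∑ k ∈ Finset.Icc 1 M,
        (Complex.exp (Complex.I * k * x) - Complex.exp (Complex.I * k * y)) / k)‖
      ≤ π * (Real.log x - Real.log y) :=
  exp_sum_diff_le_pi_log_general x y hy hyx hx M
end

section
/- There exists a constant K > 0 such that for every positive integer M and every y ∈ (0, π), |Σ_{k=1}^{M} sin(ky)/k| ≤ K; i.e., the partial sums of Σ sin(ky)/k are uniformly bounded in M and y. -/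
/-!
Split the sum at `N = ⌊1 / y⌋`. Each of the first `N` terms has absolute value at most `y`, so
they contribute at most `1`. The sums `∑_{k ≤ n} sin (k y)` are bounded by `1 / sin (y / 2) ≤ π / y`
(Dirichlet kernel and Jordan's inequality), so Abel summation against the decreasing weights `1 / k`
bounds the tail by `2 (π / y) / (N + 1) ≤ 2π`.
-/

open scoped Real
open Finset

theorem norm_sum_Ico_smul_le_of_antitone {E : Type*} [SeminormedAddCommGroup E] [NormedSpace ℝ E]
    {f : ℕ → ℝ} {g : ℕ → E} {B : ℝ} (hf : Antitone f) (hf0 : ∀ i, 0 ≤ f i)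
    (hgB : ∀ n, ‖∑ i ∈ range n, g i‖ ≤ B) {m n : ℕ} (hmn : m ≤ n) :
    ‖∑ i ∈ Ico m n, f i • g i‖ ≤ 2 * B * f m := by
  rcases hmn.eq_or_lt with rfl | hmn
  · have hB : 0 ≤ B := (norm_nonneg _).trans (hgB 0)
    simpa using mul_nonneg (mul_nonneg zero_le_two hB) (hf0 m)
  rw [sum_Ico_by_parts f g hmn]
  have hend (k l : ℕ) : ‖f k • ∑ i ∈ range l, g i‖ ≤ f k * B := by
    rw [norm_smul, Real.norm_of_nonneg (hf0 k)]
    exact mul_le_mul_of_nonneg_left (hgB l) (hf0 k)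
  have hstep (i : ℕ) :
      ‖(f (i + 1) - f i) • ∑ j ∈ range (i + 1), g j‖ ≤ (f i - f (i + 1)) * B := by
    have hfi : 0 ≤ f i - f (i + 1) := sub_nonneg.2 (hf i.le_succ)
    rw [norm_smul, Real.norm_eq_abs, abs_sub_comm, abs_of_nonneg hfi]
    exact mul_le_mul_of_nonneg_left (hgB _) hfi
  have htelescope : ∑ i ∈ Ico m (n - 1), (f i - f (i + 1)) = f m - f (n - 1) := by
    rw [← neg_sub (f (n - 1)), ← sum_Ico_sub f (Nat.le_sub_one_of_lt hmn), ← sum_neg_distrib]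
    simp_rw [neg_sub]
  calc ‖f (n - 1) • ∑ i ∈ range n, g i - f m • ∑ i ∈ range m, g i
        - ∑ i ∈ Ico m (n - 1), (f (i + 1) - f i) • ∑ j ∈ range (i + 1), g j‖
      ≤ f (n - 1) * B + f m * B + ∑ i ∈ Ico m (n - 1), (f i - f (i + 1)) * B := by
        refine (norm_sub_le _ _).trans (add_le_add ?_ ?_)
        · exact (norm_sub_le _ _).trans (add_le_add (hend _ _) (hend _ _))
        · exact (norm_sum_le _ _).trans (sum_le_sum fun i _ ↦ hstep i)
    _ = 2 * B * f m := by rw [← sum_mul, htelescope]; ring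

theorem abs_sin_half_mul_sum_range_sin_le_one (y : ℝ) (n : ℕ) :
    |Real.sin (y / 2)| * |∑ i ∈ range n, Real.sin ((i + 1) * y)| ≤ 1 := by
  have h := Real.sin_mul_sum_sin n y y
  simp only [mul_comm y, ← add_one_mul] at h
  rw [← abs_mul, h, abs_mul]
  exact mul_le_one₀ (Real.abs_sin_le_one _) (abs_nonneg _) (Real.abs_sin_le_one _)

theorem abs_sum_range_sin_le {y : ℝ} (hy : y ∈ Set.Ioo 0 π) (n : ℕ) :
    |∑ i ∈ range n, Real.sin ((i + 1) * y)| ≤ π / y := by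
  obtain ⟨hy0, hyπ⟩ := hy
  have hjordan : y / π ≤ Real.sin (y / 2) :=
    (by ring : y / π = 2 / π * (y / 2)).trans_le (Real.mul_le_sin (by positivity) (by linarith))
  have hsin : 0 < Real.sin (y / 2) := (div_pos hy0 Real.pi_pos).trans_le hjordan
  have hS := abs_sin_half_mul_sum_range_sin_le_one y n
  rw [abs_of_pos hsin] at hS
  rw [le_div_iff₀ hy0]
  calc |∑ i ∈ range n, Real.sin ((i + 1) * y)| * y
      ≤ |∑ i ∈ range n, Real.sin ((i + 1) * y)| * (π * Real.sin (y / 2)) := by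
        exact mul_le_mul_of_nonneg_left ((div_le_iff₀' Real.pi_pos).1 hjordan) (abs_nonneg _)
    _ = π * (Real.sin (y / 2) * |∑ i ∈ range n, Real.sin ((i + 1) * y)|) := by ring
    _ ≤ π := mul_le_of_le_one_right Real.pi_pos.le hS

theorem abs_sum_range_sin_div_le {y : ℝ} (hy : 0 ≤ y) (n : ℕ) :
    |∑ i ∈ range n, Real.sin ((i + 1) * y) / (i + 1)| ≤ n * y := by
  have hterm (i : ℕ) : |Real.sin ((i + 1) * y) / (i + 1)| ≤ y := by
    rw [abs_div, abs_of_pos (by positivity : (0 : ℝ) < i + 1), div_le_iff₀' (by positivity)]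
    exact Real.abs_sin_le_abs.trans_eq (abs_of_nonneg (by positivity))
  calc |∑ i ∈ range n, Real.sin ((i + 1) * y) / (i + 1)|
      ≤ ∑ i ∈ range n, y := (abs_sum_le_sum_abs _ _).trans (sum_le_sum fun i _ ↦ hterm i)
    _ = n * y := by simp

theorem abs_sum_Ico_sin_div_le {y : ℝ} (hy : y ∈ Set.Ioo 0 π) {m n : ℕ} (hmn : m ≤ n) :
    |∑ i ∈ Ico m n, Real.sin ((i + 1) * y) / (i + 1)| ≤ 2 * π / ((m + 1) * y) := by
  have hanti : Antitone fun i : ℕ ↦ ((i : ℝ) + 1)⁻¹ := fun i j hij ↦ by dsimp only; gcongr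
  have h := norm_sum_Ico_smul_le_of_antitone (g := fun i ↦ Real.sin ((i + 1) * y)) hanti
    (fun i ↦ by positivity) (fun n ↦ (Real.norm_eq_abs _).trans_le (abs_sum_range_sin_le hy n)) hmn
  simp only [smul_eq_mul, Real.norm_eq_abs, ← div_eq_inv_mul] at h
  exact h.trans_eq (by field_simp)

theorem sine_series_partial_sums_uniformly_bounded :
    ∃ K : ℝ, 0 < K ∧ ∀ (M : ℕ) (y : ℝ), y ∈ Set.Ioo 0 π →
      |∑ k ∈ Finset.Icc 1 M, Real.sin (k * y) / k| ≤ K := by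
  refine ⟨1 + 2 * π, by positivity, fun M y hy ↦ ?_⟩
  have hy0 : 0 < y := hy.1
  -- reindexed so that the weights `1 / (i + 1)` are antitone on all of `ℕ` (`1 / 0 = 0` is not)
  have hshift : ∑ k ∈ Icc 1 M, Real.sin (k * y) / k
      = ∑ i ∈ range M, Real.sin ((i + 1) * y) / (i + 1) := by
    rw [← Ico_add_one_right_eq_Icc, sum_Ico_eq_sum_range]
    simp [add_comm]
  rw [hshift]
  set N := ⌊1 / y⌋₊
  have hN : N * y ≤ 1 := (le_div_iff₀ hy0).1 (Nat.floor_le (by positivity))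
  have hN' : 1 ≤ (N + 1) * y := (div_le_iff₀ hy0).1 (Nat.lt_floor_add_one _).le
  rcases le_total M N with hMN | hNM
  · calc _ ≤ M * y := abs_sum_range_sin_div_le hy0.le M
      _ ≤ 1 := le_trans (by gcongr) hN
      _ ≤ 1 + 2 * π := by linarith [Real.pi_pos]
  · rw [← sum_range_add_sum_Ico _ hNM]
    calc _ ≤ N * y + 2 * π / ((N + 1) * y) :=
          (abs_add_le _ _).trans (add_le_add (abs_sum_range_sin_div_le hy0.le N)
            (abs_sum_Ico_sin_div_le hy hNM))
      _ ≤ 1 + 2 * π := add_le_add hN (div_le_self (by positivity) hN')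
end

section
/- For every δ ∈ (0, π) and all x, y ∈ [δ/2, 2π − δ/2] with x ≠ y, |Σ_{k=1}^{M-1} (e^{-ikx} − e^{-iky})/(k(1 − e^{i(x−y)}))| ≤ 1/sin²(δ/4). -/
open scoped Real

open Finset Complex

/-!
Put `w₁ = e^{-ix}`, `w₂ = e^{-iy}` and `L(z) = ∑_{k=1}^{M-1} z^k / k`, a partial sum of
`-log (1 - z)`. Since `1 - e^{i(x-y)} = e^{ix} (w₁ - w₂)`, the sum is
`(L(w₁) - L(w₂)) / (e^{ix} (w₁ - w₂))`. Both points lie in the convex set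
`{|z| ≤ 1, Re z ≤ cos (δ/2) = 1 - 2 sin² (δ/4)}`, on which
`|L'(z)| = |z^{M-1} - 1| / |z - 1| ≤ 2 / (1 - Re z)`, so the mean value inequality along the
chord `[w₂, w₁]` gives the bound.
-/

theorem Real.cos_le_cos_of_mem_Icc_two_pi_sub {a x : ℝ} (ha : 0 ≤ a)
    (hx : x ∈ Set.Icc a (2 * π - a)) : Real.cos x ≤ Real.cos a := by
  obtain ⟨hax, hxa⟩ := hx
  rcases le_total x π with hxπ | hπx
  · exact Real.cos_le_cos_of_nonneg_of_le_pi ha hxπ hax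
  · rw [← Real.cos_two_pi_sub]
    exact Real.cos_le_cos_of_nonneg_of_le_pi ha (by linarith) (by linarith)

theorem Complex.norm_geom_sum_le_of_re_le {z : ℂ} {ε : ℝ} (hε : 0 < ε) (hz : ‖z‖ ≤ 1)
    (hre : z.re ≤ 1 - ε) (n : ℕ) : ‖∑ j ∈ range n, z ^ j‖ ≤ 2 / ε := by
  have hdist : ε ≤ ‖z - 1‖ := by
    have := Complex.abs_re_le_norm (z - 1)
    rw [sub_re, one_re, abs_sub_comm, abs_of_nonneg (by linarith)] at this
    linarith
  have hz1 : z ≠ 1 := fun h => by simp [h] at hdist; linarith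
  have hnum : ‖z ^ n - 1‖ ≤ 2 :=
    calc ‖z ^ n - 1‖ ≤ ‖z‖ ^ n + ‖(1 : ℂ)‖ := by simpa using norm_sub_le (z ^ n) 1
      _ ≤ 1 + 1 := by gcongr; exacts [pow_le_one₀ (norm_nonneg z) hz, norm_one.le]
      _ = 2 := by norm_num
  rw [geom_sum_eq hz1, norm_div]
  exact div_le_div₀ zero_le_two hnum hε hdist

noncomputable def logSeriesPartialSum (n : ℕ) (z : ℂ) : ℂ :=
  ∑ k ∈ range n, z ^ (k + 1) / (k + 1)

theorem hasDerivAt_logSeriesPartialSum (n : ℕ) (z : ℂ) :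
    HasDerivAt (logSeriesPartialSum n) (∑ k ∈ range n, z ^ k) z := by
  unfold logSeriesPartialSum
  have hterm : ∀ k ∈ range n,
      HasDerivAt (fun w : ℂ => w ^ (k + 1) / (k + 1)) (z ^ k) z := by
    intro k _
    have hk : (k + 1 : ℂ) ≠ 0 := by exact_mod_cast k.succ_ne_zero
    have := (hasDerivAt_pow (k + 1) z).div_const ((k : ℂ) + 1)
    rwa [Nat.add_sub_cancel, Nat.cast_succ, mul_div_cancel_left₀ _ hk] at this
  exact HasDerivAt.fun_sum hterm

theorem norm_logSeriesPartialSum_sub_le {ε : ℝ} (hε : 0 < ε) {a b : ℂ}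
    (ha : ‖a‖ ≤ 1) (ha' : a.re ≤ 1 - ε) (hb : ‖b‖ ≤ 1) (hb' : b.re ≤ 1 - ε) (n : ℕ) :
    ‖logSeriesPartialSum n b - logSeriesPartialSum n a‖ ≤ 2 / ε * ‖b - a‖ := by
  have hconv : Convex ℝ (Metric.closedBall (0 : ℂ) 1 ∩ {z | z.re ≤ 1 - ε}) :=
    (convex_closedBall 0 1).inter (convex_halfSpace_re_le _)
  refine hconv.norm_image_sub_le_of_norm_hasDerivWithin_le
    (fun z _ => (hasDerivAt_logSeriesPartialSum n z).hasDerivWithinAt) ?_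
    ⟨by simpa using ha, ha'⟩ ⟨by simpa using hb, hb'⟩
  rintro z ⟨hz, hz'⟩
  exact norm_geom_sum_le_of_re_le hε (by simpa using hz) hz' n

theorem sum_exp_sub_exp_div_eq (N : ℕ) (x y : ℂ) :
    ∑ k ∈ Icc 1 N, (exp (-I * k * x) - exp (-I * k * y)) / (k * (1 - exp (I * (x - y))))
      = (logSeriesPartialSum N (exp (-I * x)) - logSeriesPartialSum N (exp (-I * y))) /
          (exp (I * x) * (exp (-I * x) - exp (-I * y))) := by
  have hpow : ∀ (k : ℕ) (t : ℂ), exp (-I * k * t) = exp (-I * t) ^ k := fun k t => by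
    rw [← Complex.exp_nat_mul]; ring_nf
  have hden : 1 - exp (I * (x - y)) = exp (I * x) * (exp (-I * x) - exp (-I * y)) := by
    rw [mul_sub (exp _), ← Complex.exp_add, ← Complex.exp_add, show I * x + -I * x = 0 by ring,
      show I * x + -I * y = I * (x - y) by ring, Complex.exp_zero]
  rw [← Ico_add_one_right_eq_Icc, sum_Ico_eq_sum_range, logSeriesPartialSum, logSeriesPartialSum,
    ← sum_sub_distrib, sum_div, Nat.add_sub_cancel]
  refine sum_congr rfl fun k _ => ?_
  rw [hpow, hpow, hden, add_comm 1 k]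
  simp only [div_eq_mul_inv, mul_inv]
  push_cast
  ring

theorem g2_bound_away_from_diag_general (δ : ℝ) (hδ : δ ∈ Set.Ioo 0 π) (M : ℕ)
    (x y : ℝ) (hx : x ∈ Set.Icc (δ / 2) (2 * π - δ / 2))
    (hy : y ∈ Set.Icc (δ / 2) (2 * π - δ / 2)) :
    ‖(∑ k ∈ Finset.Icc 1 (M - 1),
        (Complex.exp (-Complex.I * k * x) - Complex.exp (-Complex.I * k * y)) /
          (k * (1 - Complex.exp (Complex.I * (x - y)))))‖
      ≤ 1 / (Real.sin (δ / 4)) ^ 2 := by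
  obtain ⟨hδ0, hδπ⟩ := hδ
  set ε := 2 * Real.sin (δ / 4) ^ 2
  have hε : 0 < ε := by
    have := Real.sin_pos_of_pos_of_lt_pi (x := δ / 4) (by linarith) (by linarith)
    positivity
  have hcos : Real.cos (δ / 2) = 1 - ε := by
    rw [show δ / 2 = 2 * (δ / 4) by ring, Real.cos_two_mul', ← Real.sin_sq_add_cos_sq (δ / 4)]
    ring
  have hpoint : ∀ t ∈ Set.Icc (δ / 2) (2 * π - δ / 2),
      ‖exp (-I * t)‖ = 1 ∧ (exp (-I * t)).re ≤ 1 - ε := fun t ht => by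
    rw [show -I * t = ((-t : ℝ) : ℂ) * I by push_cast; ring, norm_exp_ofReal_mul_I,
      exp_ofReal_mul_I_re, Real.cos_neg, ← hcos]
    exact ⟨rfl, Real.cos_le_cos_of_mem_Icc_two_pi_sub (by linarith) ht⟩
  obtain ⟨hx₁, hx₂⟩ := hpoint x hx
  obtain ⟨hy₁, hy₂⟩ := hpoint y hy
  rw [sum_exp_sub_exp_div_eq, norm_div, norm_mul, norm_exp_I_mul_ofReal, one_mul]
  calc _ ≤ 2 / ε := div_le_of_le_mul₀ (norm_nonneg _) (by positivity)
          (norm_logSeriesPartialSum_sub_le hε hy₁.le hy₂ hx₁.le hx₂ _)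
    _ = 1 / Real.sin (δ / 4) ^ 2 := by rw [div_mul_eq_div_div, div_self two_ne_zero]

theorem g2_bound_away_from_diag (δ : ℝ) (hδ : δ ∈ Set.Ioo 0 π) (M : ℕ) (hM : 2 ≤ M)
    (x y : ℝ) (hx : x ∈ Set.Icc (δ / 2) (2 * π - δ / 2))
    (hy : y ∈ Set.Icc (δ / 2) (2 * π - δ / 2)) (hxy : x ≠ y) :
    ‖(∑ k ∈ Finset.Icc 1 (M - 1),
        (Complex.exp (-Complex.I * k * x) - Complex.exp (-Complex.I * k * y)) /
          (k * (1 - Complex.exp (Complex.I * (x - y)))))‖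
      ≤ 1 / (Real.sin (δ / 4)) ^ 2 :=
  g2_bound_away_from_diag_general δ hδ M x y hx hy
end

section
/- Let f be a positive measurable function on (0, π] of the form f(x) = x^{−a} L(1/x) for a ∈ (0,1) and L slowly varying at ∞. Then ∫_0^x f(t) dt ~ x^{1−a} L(1/x)/(1−a) as x → 0⁺. -/
open scoped Real

/-- `L` is slowly varying at `∞`. -/
def SlowlyVarying (L : ℝ → ℝ) : Prop :=
  ∀ l : ℝ, 0 < l → Filter.Tendsto (fun u => L (l * u) / L u) Filter.atTop (nhds 1)

/-!
Write `h u = log (L (exp u))`. Slow variation says `h (x + t) - h x → 0` for each `t`; since `h` is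
measurable, a measure-theoretic covering argument (the Csiszár–Erdős proof of the uniform
convergence theorem) upgrades this to uniform convergence for `t ∈ [0, 1]`, and chaining unit
steps gives Potter's bound `L (l u) / L u ≤ e^δ l^δ` for `l ≥ 1` and large `u`.
After substituting `t = x s`, the quotient to be studied is
`(1 - a) ∫₀¹ s^(-a) L (1 / (x s)) / L (1 / x) ds`; the integrand tends to `s^(-a)` pointwise and
Potter's bound with `δ = (1 - a) / 2` dominates it by the integrable `e^δ s^(-(a + δ))`, so
dominated convergence gives the limit `(1 - a) ∫₀¹ s^(-a) ds = 1`.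
-/

open Filter MeasureTheory Set Topology

theorem SlowlyVarying.tendsto_log_comp_exp_add_sub {L : ℝ → ℝ} (hL : SlowlyVarying L)
    (hLpos : ∀ u, 0 < u → 0 < L u) (t : ℝ) :
    Tendsto (fun x => Real.log (L (Real.exp (x + t))) - Real.log (L (Real.exp x)))
      atTop (𝓝 0) := by
  have hlog := ((Real.continuousAt_log one_ne_zero).tendsto.comp
    ((hL _ (Real.exp_pos t)).comp Real.tendsto_exp_atTop))
  rw [Real.log_one] at hlog
  refine hlog.congr fun x => ?_
  rw [Function.comp_apply, Function.comp_apply, ← Real.exp_add, add_comm t x,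
    Real.log_div (hLpos _ (Real.exp_pos _)).ne' (hLpos _ (Real.exp_pos _)).ne']

theorem tendsto_measure_setOf_le_abs_add_sub {h : ℝ → ℝ} (hmeas : Measurable h)
    (hlim : ∀ t, Tendsto (fun x => h (x + t) - h x) atTop (𝓝 0))
    (μ : Measure ℝ) [IsFiniteMeasure μ] {ε : ℝ} (hε : 0 < ε) :
    Tendsto (fun x => μ {t | ε ≤ |h (x + t) - h x|}) atTop (𝓝 0) := by
  rw [← measure_empty (μ := μ)]
  refine tendsto_measure_of_tendsto_indicator_of_isFiniteMeasure atTop μ (fun x => ?_)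
    (fun t => ?_)
  · exact measurableSet_le measurable_const
      ((hmeas.comp (measurable_const.add measurable_id)).sub measurable_const).abs
  · filter_upwards [(hlim t).abs.eventually (gt_mem_nhds (by simpa using hε))] with x hx
    simpa using hx

theorem Icc_subset_union_preimage_setOf_le_abs_add_sub {h : ℝ → ℝ} {ε x u : ℝ}
    (hu : u ∈ Icc (0 : ℝ) 1) (hjump : ε ≤ |h (x + u) - h x|) :
    Icc (0 : ℝ) 2 ⊆ (Icc (-1) 2 ∩ {t | ε / 2 ≤ |h (x + t) - h x|}) ∪
      (· + -u) ⁻¹' (Icc (-1) 2 ∩ {t | ε / 2 ≤ |h (x + u + t) - h (x + u)|}) := by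
  intro t ⟨ht0, ht2⟩
  by_cases hsmall : ε / 2 ≤ |h (x + t) - h x|
  · exact Or.inl ⟨⟨by linarith, ht2⟩, hsmall⟩
  refine Or.inr ⟨⟨by linarith [hu.2], by linarith [hu.1]⟩, ?_⟩
  have hshift : x + u + (t + -u) = x + t := by ring
  simp only [mem_ofPred_eq, hshift]
  have := abs_sub_abs_le_abs_sub (h (x + u) - h x) (h (x + t) - h x)
  rw [abs_sub_comm (h (x + u) - h x), sub_sub_sub_cancel_right] at this
  linarith

/-- The uniform convergence theorem, in additive form. -/
theorem tendstoUniformlyOn_add_sub_Icc {h : ℝ → ℝ} (hmeas : Measurable h)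
    (hlim : ∀ t, Tendsto (fun x => h (x + t) - h x) atTop (𝓝 0)) :
    TendstoUniformlyOn (fun x u => h (x + u) - h x) 0 atTop (Icc 0 1) := by
  rw [Metric.tendstoUniformlyOn_iff]
  intro ε hε
  by_contra hbad
  obtain ⟨X, hX⟩ := eventually_atTop.mp <|
    (tendsto_measure_setOf_le_abs_add_sub hmeas hlim (volume.restrict (Icc (-1) 2))
      (half_pos hε)).eventually (gt_mem_nhds one_pos)
  have hfreq := (not_eventually.mp hbad).forall_exists_of_atTop X
  simp only [mem_Icc, Pi.zero_apply, dist_zero_left, Real.norm_eq_abs, and_imp, not_forall,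
    not_lt] at hfreq
  obtain ⟨x, hxX, u, hu0, hu1, hjump⟩ := hfreq
  have hA := hX x hxX
  have hC := hX (x + u) (by linarith)
  rw [Measure.restrict_apply' measurableSet_Icc, inter_comm] at hA hC
  have hcover := (measure_mono (μ := volume)
    (Icc_subset_union_preimage_setOf_le_abs_add_sub ⟨hu0, hu1⟩ hjump)).trans
    (measure_union_le _ _)
  rw [measure_preimage_add_right, Real.volume_Icc, sub_zero, ENNReal.ofReal_ofNat] at hcover
  exact lt_irrefl _ (hcover.trans_lt ((ENNReal.add_lt_add hA hC).trans_eq one_add_one_eq_two))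

theorem add_sub_le_mul_add_one {h : ℝ → ℝ} {X δ : ℝ}
    (hstep : ∀ x ≥ X, ∀ u ∈ Icc (0 : ℝ) 1, h (x + u) - h x ≤ δ) {x s : ℝ} (hx : X ≤ x)
    (hs : 0 ≤ s) : h (x + s) - h x ≤ δ * (s + 1) := by
  have hδ : 0 ≤ δ := by simpa using hstep x hx 0 ⟨le_rfl, zero_le_one⟩
  induction hn : ⌈s⌉₊ generalizing x s with
  | zero =>
    obtain rfl : s = 0 := le_antisymm (Nat.ceil_eq_zero.mp hn) hs
    simpa using hδ
  | succ n ih =>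
    rcases le_or_gt s 1 with hs1 | hs1
    · nlinarith [hstep x hx s ⟨hs, hs1⟩]
    have htail := ih (x := x + 1) (s := s - 1) (by linarith) (by linarith)
      (by rw [Nat.ceil_sub_one, hn, Nat.add_sub_cancel])
    rw [show x + 1 + (s - 1) = x + s by ring] at htail
    linarith [hstep x hx 1 ⟨zero_le_one, le_rfl⟩]

/-- Potter's bound. -/
theorem SlowlyVarying.eventually_div_le_exp_mul_rpow {L : ℝ → ℝ} (hL : SlowlyVarying L)
    (hLpos : ∀ u, 0 < u → 0 < L u) (hLmeas : Measurable L) {δ : ℝ} (hδ : 0 < δ) :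
    ∀ᶠ u in atTop, ∀ l ≥ (1 : ℝ), L (l * u) / L u ≤ Real.exp δ * l ^ δ := by
  set h : ℝ → ℝ := fun x => Real.log (L (Real.exp x))
  have hunif := Metric.tendstoUniformlyOn_iff.mp (tendstoUniformlyOn_add_sub_Icc
    (Real.measurable_log.comp (hLmeas.comp Real.measurable_exp))
    (hL.tendsto_log_comp_exp_add_sub hLpos)) δ hδ
  obtain ⟨X, hX⟩ := eventually_atTop.mp hunif
  have hstep : ∀ x ≥ X, ∀ u ∈ Icc (0 : ℝ) 1, h (x + u) - h x ≤ δ := fun x hx u hu =>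
    (le_abs_self _).trans (by simpa [Real.dist_eq, abs_sub_comm] using (hX x hx u hu).le)
  filter_upwards [eventually_ge_atTop (Real.exp X)] with u hu l hl
  have hu0 : 0 < u := (Real.exp_pos X).trans_le hu
  have hl0 : 0 < l := one_pos.trans_le hl
  have hlog := add_sub_le_mul_add_one hstep ((Real.le_log_iff_exp_le hu0).mpr hu)
    (Real.log_nonneg hl)
  simp only [h, Real.exp_add, Real.exp_log hu0, Real.exp_log hl0, mul_comm u l] at hlog
  calc L (l * u) / L u = Real.exp (Real.log (L (l * u)) - Real.log (L u)) := by
        rw [Real.exp_sub, Real.exp_log (hLpos _ (by positivity)), Real.exp_log (hLpos _ hu0)]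
    _ ≤ Real.exp (δ * (Real.log l + 1)) := Real.exp_le_exp.mpr hlog
    _ = Real.exp δ * l ^ δ := by
        rw [Real.rpow_def_of_pos hl0, ← Real.exp_add]
        ring_nf

theorem SlowlyVarying.tendsto_div_comp_inv_mul {L : ℝ → ℝ} (hL : SlowlyVarying L) {s : ℝ}
    (hs : 0 < s) : Tendsto (fun x => L (1 / (x * s)) / L (1 / x)) (𝓝[>] 0) (𝓝 1) := by
  refine ((hL s⁻¹ (inv_pos.mpr hs)).comp tendsto_inv_nhdsGT_zero).congr fun x => ?_
  simp only [Function.comp_apply, one_div, mul_inv, mul_comm]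

theorem integral_Ioc_zero_one_rpow_neg {a : ℝ} (ha : a < 1) :
    ∫ s in Ioc (0 : ℝ) 1, s ^ (-a) = 1 / (1 - a) := by
  rw [← intervalIntegral.integral_of_le zero_le_one, integral_rpow (Or.inl (by linarith)),
    Real.one_rpow, Real.zero_rpow (by linarith), neg_add_eq_sub, sub_zero]

theorem SlowlyVarying.tendsto_setIntegral_rpow_mul_div {L : ℝ → ℝ} (hL : SlowlyVarying L)
    (hLpos : ∀ u, 0 < u → 0 < L u) (hLmeas : Measurable L) {a : ℝ} (ha : a < 1) :
    Tendsto (fun x => ∫ s in Ioc (0 : ℝ) 1, s ^ (-a) * (L (1 / (x * s)) / L (1 / x)))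
      (𝓝[>] 0) (𝓝 (1 / (1 - a))) := by
  set δ := (1 - a) / 2
  have hδ : 0 < δ := by positivity
  rw [← integral_Ioc_zero_one_rpow_neg ha]
  refine tendsto_integral_filter_of_dominated_convergence
    (fun s => Real.exp δ * s ^ (-(a + δ))) (Eventually.of_forall fun x => ?_) ?_ ?_ ?_
  · exact ((measurable_id.pow_const _).mul ((hLmeas.comp (measurable_const.div
      (measurable_const.mul measurable_id))).div_const _)).aestronglyMeasurable
  · filter_upwards [tendsto_inv_nhdsGT_zero.eventually
      (hL.eventually_div_le_exp_mul_rpow hLpos hLmeas hδ), self_mem_nhdsWithin] with x hx hx0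
    refine (ae_restrict_iff' measurableSet_Ioc).mpr (Eventually.of_forall fun s ⟨hs0, hs1⟩ => ?_)
    have hratio := hx s⁻¹ (one_le_inv₀ hs0 |>.mpr hs1)
    rw [← mul_inv, ← one_div, ← one_div, mul_comm, Real.inv_rpow hs0.le,
      ← Real.rpow_neg hs0.le] at hratio
    have hLxs := hLpos _ (one_div_pos.mpr (mul_pos hx0 hs0))
    have hLx := hLpos _ (one_div_pos.mpr hx0)
    rw [Real.norm_of_nonneg (by positivity), neg_add, Real.rpow_add hs0]
    calc s ^ (-a) * (L (1 / (x * s)) / L (1 / x)) ≤ s ^ (-a) * (Real.exp δ * s ^ (-δ)) := by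
          gcongr
      _ = _ := by ring
  · exact ((intervalIntegrable_iff_integrableOn_Ioc_of_le zero_le_one).mp
      (intervalIntegral.intervalIntegrable_rpow' (by simp only [δ]; linarith))).const_mul _
  · refine (ae_restrict_iff' measurableSet_Ioc).mpr (Eventually.of_forall fun s hs => ?_)
    simpa using (hL.tendsto_div_comp_inv_mul hs.1).const_mul (s ^ (-a))

theorem intervalIntegral_eq_rpow_mul_setIntegral_div {L f : ℝ → ℝ} {a x : ℝ} (hx : 0 < x)
    (hLx : L (1 / x) ≠ 0) (hf : ∀ t ∈ Ioc 0 x, f t = t ^ (-a) * L (1 / t)) :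
    ∫ t in 0..x, f t =
      x ^ (1 - a) * L (1 / x) * ∫ s in Ioc (0 : ℝ) 1, s ^ (-a) * (L (1 / (x * s)) / L (1 / x)) := by
  have hsubst : ∫ t in 0..x, f t = x * ∫ s in Ioc (0 : ℝ) 1, f (x * s) := by
    rw [← intervalIntegral.integral_of_le zero_le_one,
      intervalIntegral.integral_comp_mul_left f hx.ne', mul_zero, mul_one, smul_eq_mul,
      mul_inv_cancel_left₀ hx.ne']
  have hpow : x ^ (1 - a) = x * x ^ (-a) := by
    rw [sub_eq_add_neg, Real.rpow_add hx, Real.rpow_one]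
  rw [hsubst, hpow]
  calc x * ∫ s in Ioc (0 : ℝ) 1, f (x * s)
      = x * ∫ s in Ioc (0 : ℝ) 1,
          x ^ (-a) * L (1 / x) * (s ^ (-a) * (L (1 / (x * s)) / L (1 / x))) := by
        congr 1
        refine setIntegral_congr_fun measurableSet_Ioc fun s ⟨hs0, hs1⟩ => ?_
        rw [hf _ ⟨mul_pos hx hs0, mul_le_of_le_one_right hx.le hs1⟩, Real.mul_rpow hx.le hs0.le]
        field_simp
    _ = _ := by rw [integral_const_mul]; ring

theorem karamata_integral_at_zero_general (a : ℝ) (ha : a ∈ Set.Ioo (0 : ℝ) 1)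
    (L : ℝ → ℝ) (hL : SlowlyVarying L) (hLpos : ∀ u, 0 < u → 0 < L u)
    (hLmeas : Measurable L)
    (f : ℝ → ℝ) (hf : ∀ x ∈ Set.Ioc (0 : ℝ) π, f x = x ^ (-a) * L (1 / x)) :
    Filter.Tendsto (fun x => (∫ t in (0 : ℝ)..x, f t) / (x ^ (1 - a) * L (1 / x) / (1 - a)))
      (nhdsWithin 0 (Set.Ioi 0)) (nhds 1) := by
  have h1a : 0 < 1 - a := sub_pos.mpr ha.2
  have hlim := (hL.tendsto_setIntegral_rpow_mul_div hLpos hLmeas ha.2).const_mul (1 - a)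
  rw [mul_one_div_cancel h1a.ne'] at hlim
  refine hlim.congr' ?_
  filter_upwards [Ioc_mem_nhdsGT Real.pi_pos] with x ⟨hx0, hxπ⟩
  have hLx := hLpos _ (one_div_pos.mpr hx0)
  have hxa := Real.rpow_pos_of_pos hx0 (1 - a)
  rw [intervalIntegral_eq_rpow_mul_setIntegral_div hx0 hLx.ne'
    fun t ht => hf t ⟨ht.1, ht.2.trans hxπ⟩]
  field_simp

theorem karamata_integral_at_zero (a : ℝ) (ha : a ∈ Set.Ioo (0 : ℝ) 1)
    (L : ℝ → ℝ) (hL : SlowlyVarying L) (hLpos : ∀ u, 0 < u → 0 < L u)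
    (hLmeas : Measurable L)
    (f : ℝ → ℝ) (hf : ∀ x ∈ Set.Ioc (0 : ℝ) π, f x = x ^ (-a) * L (1 / x))
    (hfpos : ∀ x ∈ Set.Ioc (0 : ℝ) π, 0 < f x)
    (hint : MeasureTheory.IntegrableOn f (Set.Ioc 0 π)) :
    Filter.Tendsto (fun x => (∫ t in (0 : ℝ)..x, f t) / (x ^ (1 - a) * L (1 / x) / (1 - a)))
      (nhdsWithin 0 (Set.Ioi 0)) (nhds 1) :=
  karamata_integral_at_zero_general a ha L hL hLpos hLmeas f hf
end

section
/- Let (μ_n) and μ be Borel probability measures supported on [a, +∞) for some real a. If for every x < a, ∫ log|x − t| dμ_n(t) → ∫ log|x − t| dμ(t) < ∞ as n → ∞, then μ_n converges weakly to μ. -/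
/-!
Differentiating under the integral sign, for `x < a` the derivative of `-∫ log |x - t| dρ(t)` is
`∫ (t - x)⁻¹ dρ(t)`, and that of `∫ (t - x)⁻¹ ^ k dρ(t)` is `k ∫ (t - x)⁻¹ ^ (k + 1) dρ(t)`; all of
these are convex in `x` on `(-∞, a)`. Pointwise convergence of convex functions forces convergence
of their derivatives wherever the limit is differentiable, so inductively every inverse moment
`∫ (t - x)⁻¹ ^ k dμₙ` converges to that of `μ`. Markov's inequality for `log |a - 2 - t|`, whose
integrals are eventually bounded, makes `(μₙ)` tight. On `[a, ∞)` the polynomials in `(t - x₀)⁻¹`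
extend to a point-separating algebra of bounded continuous functions, and for a tight sequence
convergence of the integrals of such an algebra is weak convergence.
-/

open MeasureTheory Filter Set Topology

theorem slope_mem_Icc_of_hasDerivAt_of_monotoneOn {f g : ℝ → ℝ} {s : Set ℝ} (hs : s.OrdConnected)
    (hf : ∀ y ∈ s, HasDerivAt f (g y) y) (hg : MonotoneOn g s) {x y : ℝ} (hx : x ∈ s)
    (hy : y ∈ s) (hxy : x < y) : slope f x y ∈ Icc (g x) (g y) := by
  have hxy_s : Icc x y ⊆ s := hs.out hx hy
  obtain ⟨c, hc, hfc⟩ := exists_hasDerivAt_eq_slope f g hxy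
    (fun z hz => (hf z (hxy_s hz)).continuousAt.continuousWithinAt)
    (fun z hz => hf z (hxy_s (Ioo_subset_Icc_self hz)))
  rw [slope_def_field, ← hfc]
  exact ⟨hg hx (hxy_s (Ioo_subset_Icc_self hc)) hc.1.le,
    hg (hxy_s (Ioo_subset_Icc_self hc)) hy hc.2.le⟩

/-- The derivative of a convex function is squeezed between its left and right difference
quotients, and these converge. -/
theorem tendsto_of_hasDerivAt_of_monotoneOn {ι : Type*} {l : Filter ι} {f g : ι → ℝ → ℝ}
    {F : ℝ → ℝ} {s : Set ℝ} {x F' : ℝ} (hs : s.OrdConnected) (hsx : s ∈ 𝓝 x)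
    (hf : ∀ᶠ n in l, ∀ y ∈ s, HasDerivAt (f n) (g n y) y)
    (hg : ∀ᶠ n in l, MonotoneOn (g n) s)
    (hfF : ∀ y ∈ s, Tendsto (fun n => f n y) l (𝓝 (F y))) (hF : HasDerivAt F F' x) :
    Tendsto (fun n => g n x) l (𝓝 F') := by
  have hx : x ∈ s := mem_of_mem_nhds hsx
  have hslope : Tendsto (slope F x) (𝓝[≠] x) (𝓝 F') := hasDerivAt_iff_tendsto_slope.1 hF
  have hslope_n : ∀ y ∈ s, Tendsto (fun n => slope (f n) x y) l (𝓝 (slope F x y)) := by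
    intro y hy
    simp only [slope_def_field]
    exact ((hfF y hy).sub (hfF x hx)).div_const _
  refine tendsto_order.2 ⟨fun u hu => ?_, fun u hu => ?_⟩
  · obtain ⟨y, hyu, hys, hyx⟩ : ∃ y, u < slope F x y ∧ y ∈ s ∧ y < x :=
      (((hslope.mono_left (nhdsLT_le_nhdsNE x)).eventually (lt_mem_nhds hu)).and
        (Eventually.and (mem_nhdsWithin_of_mem_nhds hsx) self_mem_nhdsWithin)).exists
    filter_upwards [(hslope_n y hys).eventually (lt_mem_nhds hyu), hf, hg] with n hn hfn hgn
    rw [slope_comm] at hn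
    exact hn.trans_le (slope_mem_Icc_of_hasDerivAt_of_monotoneOn hs hfn hgn hys hx hyx).2
  · obtain ⟨y, hyu, hys, hxy⟩ : ∃ y, slope F x y < u ∧ y ∈ s ∧ x < y :=
      (((hslope.mono_left (nhdsGT_le_nhdsNE x)).eventually (gt_mem_nhds hu)).and
        (Eventually.and (mem_nhdsWithin_of_mem_nhds hsx) self_mem_nhdsWithin)).exists
    filter_upwards [(hslope_n y hys).eventually (gt_mem_nhds hyu), hf, hg] with n hn hfn hgn
    exact (slope_mem_Icc_of_hasDerivAt_of_monotoneOn hs hfn hgn hx hys hxy).1.trans_lt hn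

lemma norm_inv_sub_pow_le {c t x : ℝ} (hc : 0 < c) (h : c ≤ t - x) (k : ℕ) :
    ‖(t - x)⁻¹ ^ k‖ ≤ c⁻¹ ^ k := by
  have hpos : 0 < t - x := hc.trans_le h
  rw [norm_pow, Real.norm_of_nonneg (inv_nonneg.2 hpos.le)]
  exact pow_le_pow_left₀ (inv_nonneg.2 hpos.le) (inv_anti₀ hc h) k

lemma hasDerivAt_inv_sub_pow {t y : ℝ} (h : y ≠ t) (k : ℕ) :
    HasDerivAt (fun x => (t - x)⁻¹ ^ k) (k * (t - y)⁻¹ ^ (k + 1)) y := by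
  have hinv : HasDerivAt (fun x => (t - x)⁻¹) ((t - y)⁻¹ ^ 2) y := by
    have := ((hasDerivAt_id y).const_sub t).inv (sub_ne_zero.2 h.symm)
    refine this.congr_deriv ?_
    simp [inv_pow]
  refine (hinv.fun_pow k).congr_deriv ?_
  rcases k with _ | k
  · simp
  · rw [Nat.cast_succ, add_tsub_cancel_right]
    ring

lemma hasDerivAt_log_abs_sub {t y : ℝ} (h : y ≠ t) :
    HasDerivAt (fun x => Real.log |x - t|) (y - t)⁻¹ y := by
  simp only [Real.log_abs]
  simpa using ((hasDerivAt_id y).sub_const t).log (sub_ne_zero.2 h)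

lemma le_abs_sub_of_le {a t : ℝ} (x : ℝ) (ht : a ≤ t) : a - x ≤ |x - t| :=
  abs_sub_comm t x ▸ (sub_le_sub_right ht x).trans (le_abs_self _)

lemma abs_log_sub_log_le {A B c : ℝ} (hc : 0 < c) (hA : c ≤ A) (hB : c ≤ B) :
    |Real.log A - Real.log B| ≤ |A - B| / c := by
  have key : ∀ {A B : ℝ}, c ≤ A → c ≤ B → Real.log A - Real.log B ≤ |A - B| / c := by
    intro A B hA hB
    have hA0 : 0 < A := hc.trans_le hA
    have hB0 : 0 < B := hc.trans_le hB
    calc Real.log A - Real.log B = Real.log (A / B) := (Real.log_div hA0.ne' hB0.ne').symm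
      _ ≤ A / B - 1 := Real.log_le_sub_one_of_pos (div_pos hA0 hB0)
      _ = (A - B) / B := by field_simp
      _ ≤ |A - B| / c := div_le_div₀ (abs_nonneg _) (le_abs_self _) hc hB
  rw [abs_sub_le_iff]
  exact ⟨key hA hB, abs_sub_comm A B ▸ key hB hA⟩

lemma eventually_integrable_of_tendsto_integral {α ι E : Type*} [MeasurableSpace α]
    [NormedAddCommGroup E] [NormedSpace ℝ E] {l : Filter ι} {ρ : ι → Measure α} {f : α → E}
    {c : E} (h : Tendsto (fun n => ∫ x, f x ∂ρ n) l (𝓝 c)) (hc : c ≠ 0) :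
    ∀ᶠ n in l, Integrable f (ρ n) := by
  filter_upwards [h.eventually_ne hc] with n hn
  by_contra hni
  exact hn (integral_undef hni)

lemma ae_le_of_measure_Iio_eq_zero {ρ : Measure ℝ} {a : ℝ} (hρ : ρ (Iio a) = 0) :
    ∀ᵐ t ∂ρ, a ≤ t :=
  (measure_eq_zero_iff_ae_notMem.1 hρ).mono fun _ ht => not_lt.1 ht

noncomputable def logPotential (ρ : Measure ℝ) (x : ℝ) : ℝ := ∫ t, Real.log |x - t| ∂ρ

noncomputable def invMoment (ρ : Measure ℝ) (k : ℕ) (x : ℝ) : ℝ := ∫ t, (t - x)⁻¹ ^ k ∂ρ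

section Support

variable {ρ : Measure ℝ} {a : ℝ}

lemma ae_half_le_sub_of_mem_ball (hρ : ρ (Iio a) = 0) {x : ℝ} :
    ∀ᵐ t ∂ρ, ∀ y ∈ Metric.ball x ((a - x) / 2), (a - x) / 2 ≤ t - y := by
  filter_upwards [ae_le_of_measure_Iio_eq_zero hρ] with t ht y hy
  have := (abs_lt.1 (Real.dist_eq y x ▸ Metric.mem_ball.1 hy)).2
  linarith

lemma log_le_logPotential [IsProbabilityMeasure ρ] (hρ : ρ (Iio a) = 0) {x : ℝ} (hx : x < a)
    (hint : Integrable (fun t => Real.log |x - t|) ρ) : Real.log (a - x) ≤ logPotential ρ x := by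
  have h := integral_mono_ae (integrable_const (Real.log (a - x))) hint <| by
    filter_upwards [ae_le_of_measure_Iio_eq_zero hρ] with t ht
    exact Real.log_le_log (by linarith) (le_abs_sub_of_le x ht)
  simpa [logPotential] using h

variable [IsFiniteMeasure ρ]

lemma integrable_inv_sub_pow (hρ : ρ (Iio a) = 0) {x : ℝ} (hx : x < a) (k : ℕ) :
    Integrable (fun t => (t - x)⁻¹ ^ k) ρ :=
  Integrable.of_bound (by fun_prop) _ <| (ae_le_of_measure_Iio_eq_zero hρ).mono fun _ ht =>
    norm_inv_sub_pow_le (sub_pos.2 hx) (by linarith) k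

lemma integrable_log_abs_sub_of_integrable (hρ : ρ (Iio a) = 0) {x x₀ : ℝ} (hx : x < a)
    (hx₀ : x₀ < a) (hint : Integrable (fun t => Real.log |x₀ - t|) ρ) :
    Integrable (fun t => Real.log |x - t|) ρ := by
  set c := min (a - x) (a - x₀)
  have hc : 0 < c := lt_min (by linarith) (by linarith)
  have hdiff : Integrable (fun t => Real.log |x - t| - Real.log |x₀ - t|) ρ := by
    refine Integrable.of_bound (by fun_prop) (|x - x₀| / c) ?_
    filter_upwards [ae_le_of_measure_Iio_eq_zero hρ] with t ht
    have hA : c ≤ |x - t| := (min_le_left _ _).trans (le_abs_sub_of_le x ht)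
    have hB : c ≤ |x₀ - t| := (min_le_right _ _).trans (le_abs_sub_of_le x₀ ht)
    refine (abs_log_sub_log_le hc hA hB).trans (div_le_div_of_nonneg_right ?_ hc.le)
    simpa using abs_abs_sub_abs_le_abs_sub (x - t) (x₀ - t)
  refine (hint.add hdiff).congr (.of_forall fun t => ?_)
  simp

lemma hasDerivAt_invMoment (hρ : ρ (Iio a) = 0) {x : ℝ} (hx : x < a) (k : ℕ) :
    HasDerivAt (invMoment ρ k) (k * invMoment ρ (k + 1) x) x := by
  have hδ : 0 < (a - x) / 2 := by linarith
  rw [invMoment, ← integral_const_mul]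
  refine (hasDerivAt_integral_of_dominated_loc_of_deriv_le (F := fun y t => (t - y)⁻¹ ^ k)
    (F' := fun y t => k * (t - y)⁻¹ ^ (k + 1)) (Metric.ball_mem_nhds x hδ)
    (Eventually.of_forall fun y => by fun_prop) (integrable_inv_sub_pow hρ hx k)
    (by fun_prop) ?_ (integrable_const (k * ((a - x) / 2)⁻¹ ^ (k + 1))) ?_).2
  · filter_upwards [ae_half_le_sub_of_mem_ball hρ] with t ht y hy
    rw [norm_mul, Real.norm_natCast]
    exact mul_le_mul_of_nonneg_left (norm_inv_sub_pow_le hδ (ht y hy) _) k.cast_nonneg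
  · filter_upwards [ae_half_le_sub_of_mem_ball hρ] with t ht y hy
    exact hasDerivAt_inv_sub_pow (by linarith [ht y hy]) k

lemma hasDerivAt_logPotential (hρ : ρ (Iio a) = 0) {x : ℝ} (hx : x < a)
    (hint : Integrable (fun t => Real.log |x - t|) ρ) :
    HasDerivAt (logPotential ρ) (-invMoment ρ 1 x) x := by
  have hδ : 0 < (a - x) / 2 := by linarith
  rw [invMoment, ← integral_neg]
  refine (hasDerivAt_integral_of_dominated_loc_of_deriv_le (F := fun y t => Real.log |y - t|)
    (F' := fun y t => -(t - y)⁻¹ ^ 1) (Metric.ball_mem_nhds x hδ)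
    (Eventually.of_forall fun y => (Real.measurable_log.comp (by fun_prop)).aestronglyMeasurable)
    hint    (by fun_prop) ?_ (integrable_const (((a - x) / 2)⁻¹ ^ 1)) ?_).2
  · filter_upwards [ae_half_le_sub_of_mem_ball hρ] with t ht y hy
    rw [norm_neg]
    exact norm_inv_sub_pow_le hδ (ht y hy) _
  · filter_upwards [ae_half_le_sub_of_mem_ball hρ] with t ht y hy
    simpa [neg_inv] using hasDerivAt_log_abs_sub (by linarith [ht y hy] : y ≠ t)

lemma monotoneOn_invMoment (hρ : ρ (Iio a) = 0) (k : ℕ) : MonotoneOn (invMoment ρ k) (Iio a) := by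
  intro x hx y hy hxy
  refine integral_mono_ae (integrable_inv_sub_pow hρ hx k) (integrable_inv_sub_pow hρ hy k) ?_
  filter_upwards [ae_le_of_measure_Iio_eq_zero hρ] with t ht
  have hty : 0 < t - y := by linarith [mem_Iio.1 hy]
  exact pow_le_pow_left₀ (inv_nonneg.2 (by linarith)) (inv_anti₀ hty (by linarith)) k

lemma measureReal_norm_gt_mul_log_le {x₀ r : ℝ} (hρ : ρ (Iio a) = 0) (hx₀ : x₀ + 1 ≤ a)
    (hr : |a| ≤ r) (hint : Integrable (fun t => Real.log |x₀ - t|) ρ) :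
    ρ.real {t | r < ‖t‖} * Real.log (r - x₀) ≤ logPotential ρ x₀ := by
  have hra : a ≤ r := (le_abs_self a).trans hr
  have hsupp := ae_le_of_measure_Iio_eq_zero hρ
  have hnonneg : 0 ≤ᵐ[ρ] fun t => Real.log |x₀ - t| := by
    filter_upwards [hsupp] with t ht
    exact Real.log_nonneg ((by linarith : (1 : ℝ) ≤ a - x₀).trans (le_abs_sub_of_le x₀ ht))
  have hsub : {t : ℝ | r < ‖t‖} ≤ᵐ[ρ] {t | Real.log (r - x₀) ≤ Real.log |x₀ - t|} := by
    filter_upwards [hsupp] with t ht (hrt : r < |t|)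
    have hrt : r < t := (lt_abs.1 hrt).resolve_right fun h => by linarith [neg_abs_le a]
    exact Real.log_le_log (by linarith) (le_abs_sub_of_le x₀ hrt.le)
  calc ρ.real {t | r < ‖t‖} * Real.log (r - x₀)
      ≤ ρ.real {t | Real.log (r - x₀) ≤ Real.log |x₀ - t|} * Real.log (r - x₀) := by
        refine mul_le_mul_of_nonneg_right ?_ (Real.log_nonneg (by linarith))
        exact ENNReal.toReal_mono (measure_ne_top _ _) (measure_mono_ae hsub)
    _ ≤ logPotential ρ x₀ := by
        rw [mul_comm]
        exact mul_meas_ge_le_integral_of_nonneg hnonneg hint _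

end Support

section Convergence

variable {ι : Type*} {l : Filter ι} {μn : ι → Measure ℝ} {μ : Measure ℝ} {a : ℝ}

lemma tendsto_invMoment_one_of_tendsto_logPotential [∀ n, IsFiniteMeasure (μn n)]
    [IsFiniteMeasure μ] (hsupp : ∀ n, μn n (Iio a) = 0) (hsuppμ : μ (Iio a) = 0)
    (hintn : ∀ᶠ n in l, ∀ x < a, Integrable (fun t => Real.log |x - t|) (μn n))
    (hint : ∀ x < a, Integrable (fun t => Real.log |x - t|) μ)
    (hconv : ∀ x < a, Tendsto (fun n => logPotential (μn n) x) l (𝓝 (logPotential μ x)))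
    {x : ℝ} (hx : x < a) :
    Tendsto (fun n => invMoment (μn n) 1 x) l (𝓝 (invMoment μ 1 x)) :=
  tendsto_of_hasDerivAt_of_monotoneOn (f := fun n => -logPotential (μn n))
    (F := -logPotential μ) ordConnected_Iio (Iio_mem_nhds hx)
    (hintn.mono fun n hn y hy => by
      simpa using (hasDerivAt_logPotential (hsupp n) hy (hn y hy)).neg)
    (Eventually.of_forall fun n => monotoneOn_invMoment (hsupp n) 1)
    (fun y hy => (hconv y hy).neg)
    (by simpa using (hasDerivAt_logPotential hsuppμ hx (hint x hx)).neg)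

lemma tendsto_invMoment_succ_of_tendsto [∀ n, IsFiniteMeasure (μn n)] [IsFiniteMeasure μ]
    (hsupp : ∀ n, μn n (Iio a) = 0) (hsuppμ : μ (Iio a) = 0) {k : ℕ} (hk : k ≠ 0)
    (hconv : ∀ x < a, Tendsto (fun n => invMoment (μn n) k x) l (𝓝 (invMoment μ k x)))
    {x : ℝ} (hx : x < a) :
    Tendsto (fun n => invMoment (μn n) (k + 1) x) l (𝓝 (invMoment μ (k + 1) x)) := by
  have h := tendsto_of_hasDerivAt_of_monotoneOn (g := fun n y => k * invMoment (μn n) (k + 1) y)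
    ordConnected_Iio (Iio_mem_nhds hx)
    (Eventually.of_forall fun n y hy => hasDerivAt_invMoment (hsupp n) hy k)
    (Eventually.of_forall fun n =>
      (monotone_mul_left_of_nonneg k.cast_nonneg).comp_monotoneOn
        (monotoneOn_invMoment (hsupp n) (k + 1)))
    hconv (hasDerivAt_invMoment hsuppμ hx k)
  simpa [Nat.cast_ne_zero.2 hk] using h.const_mul (k : ℝ)⁻¹

theorem tendsto_invMoment_of_tendsto_logPotential [∀ n, IsProbabilityMeasure (μn n)]
    [IsProbabilityMeasure μ] (hsupp : ∀ n, μn n (Iio a) = 0) (hsuppμ : μ (Iio a) = 0)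
    (hintn : ∀ᶠ n in l, ∀ x < a, Integrable (fun t => Real.log |x - t|) (μn n))
    (hint : ∀ x < a, Integrable (fun t => Real.log |x - t|) μ)
    (hconv : ∀ x < a, Tendsto (fun n => logPotential (μn n) x) l (𝓝 (logPotential μ x)))
    (k : ℕ) {x : ℝ} (hx : x < a) :
    Tendsto (fun n => invMoment (μn n) k x) l (𝓝 (invMoment μ k x)) := by
  induction k generalizing x with
  | zero => simpa [invMoment] using tendsto_const_nhds
  | succ k ih =>
    rcases Nat.eq_zero_or_pos k with rfl | hk
    · exact tendsto_invMoment_one_of_tendsto_logPotential hsupp hsuppμ hintn hint hconv hx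
    · exact tendsto_invMoment_succ_of_tendsto hsupp hsuppμ hk.ne' (fun y hy => ih hy) hx

end Convergence

theorem isTightMeasureSet_range_of_logPotential_le {ρ : ℕ → Measure ℝ}
    [∀ n, IsFiniteMeasure (ρ n)] {a x₀ C : ℝ} (hsupp : ∀ n, ρ n (Iio a) = 0) (hx₀ : x₀ + 1 ≤ a)
    (hbound : ∀ᶠ n in atTop,
      Integrable (fun t => Real.log |x₀ - t|) (ρ n) ∧ logPotential (ρ n) x₀ ≤ C) :
    IsTightMeasureSet (range ρ) := by
  refine isTightMeasureSet_range_of_tendsto_limsup_measure_norm_gt ?_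
  have hlog : Tendsto (fun r => Real.log (r - x₀)) atTop atTop :=
    Real.tendsto_log_atTop.comp (tendsto_atTop_add_const_right atTop (-x₀) tendsto_id)
  have hlim : Tendsto (fun r => ENNReal.ofReal (C / Real.log (r - x₀))) atTop (𝓝 0) := by
    simpa using ENNReal.tendsto_ofReal (tendsto_const_nhds.div_atTop hlog)
  refine tendsto_of_tendsto_of_tendsto_of_le_of_le' tendsto_const_nhds hlim
    (.of_forall fun _ => zero_le) ?_
  filter_upwards [eventually_ge_atTop |a|, hlog.eventually_gt_atTop 0] with r hr hlogr
  refine limsup_le_of_le (by isBoundedDefault) ?_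
  filter_upwards [hbound] with n ⟨hn, hC⟩
  rw [← ofReal_measureReal]
  refine ENNReal.ofReal_le_ofReal ?_
  rw [le_div_iff₀ hlogr]
  exact (measureReal_norm_gt_mul_log_le (hsupp n) hx₀ hr hn).trans hC

section WeakConvergence

open Polynomial BoundedContinuousFunction

/-- Only the values on `[a, ∞)` are constrained, so the algebra also contains the functions
vanishing there, which separate the points of `(-∞, a)`. -/
def invPolySubalgebra (a x₀ : ℝ) : StarSubalgebra ℝ (ℝ →ᵇ ℝ) where
  carrier := {f | ∃ p : ℝ[X], ∀ t, a ≤ t → f t = p.eval (t - x₀)⁻¹}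
  mul_mem' := by
    rintro f g ⟨p, hp⟩ ⟨q, hq⟩
    exact ⟨p * q, fun t ht => by simp [hp t ht, hq t ht]⟩
  add_mem' := by
    rintro f g ⟨p, hp⟩ ⟨q, hq⟩
    exact ⟨p + q, fun t ht => by simp [hp t ht, hq t ht]⟩
  algebraMap_mem' r := ⟨C r, fun t _ => by simp⟩
  star_mem' := by simp

lemma exists_mem_invPolySubalgebra_ne {a x₀ x y : ℝ} (hx₀ : x₀ < a) (hxy : x < y) :
    ∃ f ∈ invPolySubalgebra a x₀, f x ≠ f y := by
  by_cases hxa : x < a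
  · let c := min y a
    refine ⟨ofNormedAddCommGroup (fun t => min (max (c - t) 0) 1) (by fun_prop) 1 fun t => ?_,
      ⟨0, fun t ht => ?_⟩, ?_⟩
    · rw [Real.norm_of_nonneg (le_min (le_max_right _ _) zero_le_one)]
      exact min_le_right _ _
    · simp [coe_ofNormedAddCommGroup, c, (min_le_right y a).trans ht]
    · rw [coe_ofNormedAddCommGroup, max_eq_right (sub_nonpos.2 (min_le_left y a)),
        min_eq_left zero_le_one]
      exact (lt_min (lt_max_of_lt_left (sub_pos.2 (lt_min hxy hxa))) one_pos).ne'
  · push Not at hxa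
    have hpos : ∀ t, 0 < max t a - x₀ := fun t => by linarith [le_max_right t a]
    refine ⟨ofNormedAddCommGroup (fun t => (max t a - x₀)⁻¹)
      ((by fun_prop : Continuous fun t => max t a - x₀).inv₀ fun t => (hpos t).ne') (a - x₀)⁻¹
      fun t => ?_, ⟨X, fun t ht => ?_⟩, ?_⟩
    · rw [Real.norm_of_nonneg (inv_nonneg.2 (hpos t).le)]
      exact inv_anti₀ (by linarith) (by linarith [le_max_right t a])
    · simp [max_eq_left ht]
    · simp only [coe_ofNormedAddCommGroup, max_eq_left hxa, max_eq_left (hxa.trans hxy.le), ne_eq,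
        inv_inj]
      linarith

lemma separatesPoints_invPolySubalgebra {a x₀ : ℝ} (hx₀ : x₀ < a) :
    ((invPolySubalgebra a x₀).map (toContinuousMapStarₐ ℝ)).SeparatesPoints := by
  intro x y hxy
  obtain ⟨f, hf, hfxy⟩ : ∃ f ∈ invPolySubalgebra a x₀, f x ≠ f y := by
    rcases hxy.lt_or_gt with h | h
    · exact exists_mem_invPolySubalgebra_ne hx₀ h
    · obtain ⟨f, hf, hfxy⟩ := exists_mem_invPolySubalgebra_ne hx₀ h
      exact ⟨f, hf, hfxy.symm⟩
  exact ⟨f, ⟨toContinuousMapStarₐ ℝ f, ⟨f, hf, rfl⟩, rfl⟩, hfxy⟩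

lemma integral_eq_sum_invMoment {ρ : Measure ℝ} [IsFiniteMeasure ρ] {a x₀ : ℝ}
    (hρ : ρ (Iio a) = 0) (hx₀ : x₀ < a) {f : ℝ →ᵇ ℝ} {p : ℝ[X]}
    (hp : ∀ t, a ≤ t → f t = p.eval (t - x₀)⁻¹) :
    ∫ t, f t ∂ρ = ∑ i ∈ Finset.range (p.natDegree + 1), p.coeff i * invMoment ρ i x₀ := by
  calc ∫ t, f t ∂ρ = ∫ t, ∑ i ∈ Finset.range (p.natDegree + 1), p.coeff i * (t - x₀)⁻¹ ^ i ∂ρ :=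
        integral_congr_ae <| by
          filter_upwards [ae_le_of_measure_Iio_eq_zero hρ] with t ht
          rw [hp t ht, eval_eq_sum_range]
    _ = _ := by
        rw [integral_finsetSum _ fun i _ => (integrable_inv_sub_pow hρ hx₀ i).const_mul _]
        simp only [integral_const_mul, invMoment]

theorem tendsto_of_isTightMeasureSet_of_tendsto_invMoment {ι : Type*} {l : Filter ι}
    {μn : ι → ProbabilityMeasure ℝ} {μ : ProbabilityMeasure ℝ} {a x₀ : ℝ} (hx₀ : x₀ < a)
    (hsupp : ∀ n, (μn n : Measure ℝ) (Iio a) = 0) (hsuppμ : (μ : Measure ℝ) (Iio a) = 0)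
    (htight : IsTightMeasureSet {(μn n : Measure ℝ) | n})
    (hmom : ∀ k, Tendsto (fun n => invMoment (μn n) k x₀) l (𝓝 (invMoment μ k x₀))) :
    Tendsto μn l (𝓝 μ) := by
  refine ProbabilityMeasure.tendsto_of_tight_of_separatesPoints ℝ htight
    (separatesPoints_invPolySubalgebra hx₀) ?_
  rintro f ⟨p, hp⟩
  simp only [integral_eq_sum_invMoment (hsupp _) hx₀ hp, integral_eq_sum_invMoment hsuppμ hx₀ hp]
  exact tendsto_finsetSum _ fun i _ => (hmom i).const_mul _

end WeakConvergence

theorem log_potential_convergence_implies_weak (a : ℝ)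
    (μn : ℕ → ProbabilityMeasure ℝ) (μ : ProbabilityMeasure ℝ)
    (hsupp : ∀ n, (μn n : Measure ℝ) (Set.Iio a) = 0)
    (hsuppμ : (μ : Measure ℝ) (Set.Iio a) = 0)
    (hint : ∀ x < a, Integrable (fun t => Real.log |x - t|) (μ : Measure ℝ))
    (hconv : ∀ x < a,
      Filter.Tendsto (fun n => ∫ t, Real.log |x - t| ∂(μn n : Measure ℝ)) Filter.atTop
        (nhds (∫ t, Real.log |x - t| ∂(μ : Measure ℝ)))) :
    Filter.Tendsto μn Filter.atTop (nhds μ) := by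
  have hx₀ : a - 2 < a := by linarith
  -- At `a - 2` the limit potential is at least `log 2 > 0`, so the integrals along the sequence
  -- are eventually not the junk value `0` of a non-integrable function.
  have hpos : 0 < logPotential μ (a - 2) := by
    have h := log_le_logPotential hsuppμ hx₀ (hint _ hx₀)
    rw [sub_sub_cancel] at h
    exact (Real.log_pos one_lt_two).trans_le h
  have hint₀ : ∀ᶠ n in atTop, Integrable (fun t => Real.log |a - 2 - t|) (μn n) :=
    eventually_integrable_of_tendsto_integral (hconv _ hx₀) hpos.ne'
  have hintn : ∀ᶠ n in atTop, ∀ x < a, Integrable (fun t => Real.log |x - t|) (μn n) :=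
    hint₀.mono fun n hn x hx => integrable_log_abs_sub_of_integrable (hsupp n) hx hx₀ hn
  have htight : IsTightMeasureSet {(μn n : Measure ℝ) | n} :=
    isTightMeasureSet_range_of_logPotential_le hsupp (by linarith)
      (hint₀.and ((hconv _ hx₀).eventually (eventually_le_nhds (lt_add_one _))))
  exact tendsto_of_isTightMeasureSet_of_tendsto_invMoment (by linarith : a - 1 < a) hsupp hsuppμ
    htight fun k => tendsto_invMoment_of_tendsto_logPotential hsupp hsuppμ hintn hint hconv k
      (by linarith)
end
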